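/- arXiv:2110.10970 — 2 statements merged into one kernel-verified Lean document; each statement's English description precedes it below -/
import Mathlib

section
/- Completeness for formulae: for any fuzzy theory Λ on a language L and any formula φ, every model A of Λ satisfies φ (A ⊨ φ) if and only if ⊢_Λ φ. -/
universe u

/-- A signature: operation symbols with positive arities, and constant symbols. -/
structure Signature : Type (u + 1) where
  Op : Type u
  ar : Op → ℕ+
  Const : Type u

/-- Terms of the language `(S, X)`: inductively built from variables, constants and
operation applications. -/
inductive Term (S : Signature.{u}) (X : Type u) : Type u
  | var : X → Term S X
  | const : S.Const → Term S X
  | op (f : S.Op) : (Fin (S.ar f : ℕ) → Term S X) → Term S X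

/-- Formulae: equations `s ≡ t` and membership propositions `∃_l t`. -/
inductive Formula (H : Type u) (S : Signature.{u}) (X : Type u) : Type u
  | eq : Term S X → Term S X → Formula H S X
  | mem : H → Term S X → Formula H S X

/-- A sequent `Γ ⊢ φ`. -/
abbrev Sequent (H : Type u) (S : Signature.{u}) (X : Type u) : Type u :=
  Set (Formula H S X) × Formula H S X

/-- A fuzzy theory: a set of sequents. -/
abbrev Theory (H : Type u) (S : Signature.{u}) (X : Type u) : Type u :=
  Set (Sequent H S X)

/-- Substitution of terms for variables in a term. -/
def Term.subst {S : Signature.{u}} {X : Type u} (σ : X → Term S X) :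
    Term S X → Term S X
  | .var x => σ x
  | .const c => .const c
  | .op f ts => .op f fun i => (ts i).subst σ

/-- Substitution of terms for variables in a formula. -/
def Formula.subst {H : Type u} {S : Signature.{u}} {X : Type u} (σ : X → Term S X) :
    Formula H S X → Formula H S X
  | .eq s t => .eq (s.subst σ) (t.subst σ)
  | .mem l t => .mem l (t.subst σ)

/-- The fuzzy sequent calculus: `Deriv Λ Γ φ` means that the sequent `Γ ⊢ φ` belongs
to the deductive closure `Λ^⊢` of the theory `Λ`. -/
inductive Deriv {H : Type u} [Order.Frame H] {S : Signature.{u}} {X : Type u}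
    (Λ : Theory H S X) : Set (Formula H S X) → Formula H S X → Prop
  | ax {Γ φ} : (Γ, φ) ∈ Λ → Deriv Λ Γ φ
  | assum {Γ φ} : φ ∈ Γ → Deriv Λ Γ φ
  | weak {Γ Δ φ} : Deriv Λ Γ φ → Deriv Λ (Γ ∪ Δ) φ
  | cut {Γ Φ ψ} : (∀ φ ∈ Φ, Deriv Λ Γ φ) → Deriv Λ Φ ψ → Deriv Λ Γ ψ
  | refl {Γ t} : Deriv Λ Γ (.eq t t)
  | symm {Γ s t} : Deriv Λ Γ (.eq s t) → Deriv Λ Γ (.eq t s)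
  | trans {Γ s t u} : Deriv Λ Γ (.eq s t) → Deriv Λ Γ (.eq t u) → Deriv Λ Γ (.eq s u)
  | sub {Γ φ} (σ : X → Term S X) :
      Deriv Λ Γ φ → Deriv Λ (Formula.subst σ '' Γ) (φ.subst σ)
  | cong {Γ} (f : S.Op) (ts ss : Fin (S.ar f : ℕ) → Term S X) :
      (∀ i, Deriv Λ Γ (.eq (ts i) (ss i))) → Deriv Λ Γ (.eq (.op f ts) (.op f ss))
  | inf {Γ t} : Deriv Λ Γ (.mem ⊥ t)
  | mon {Γ l t} (l' : H) : Deriv Λ Γ (.mem l t) → Deriv Λ Γ (.mem (l ⊓ l') t)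
  | exp {Γ} (f : S.Op) (ts : Fin (S.ar f : ℕ) → Term S X) (ls : Fin (S.ar f : ℕ) → H) :
      (∀ i, Deriv Λ Γ (.mem (ls i) (ts i))) →
      Deriv Λ Γ (.mem (⨅ i, ls i) (.op f ts))
  | sup {Γ t} (L : Set H) :
      (∀ l ∈ L, Deriv Λ Γ (.mem l t)) → Deriv Λ Γ (.mem (sSup L) t)
  | fn {Γ l t s} : Deriv Λ Γ (.eq t s) → Deriv Λ Γ (.mem l t) → Deriv Λ Γ (.mem l s)

/-- The deductive closure `Λ^⊢` of a theory `Λ`. -/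
def deductiveClosure {H : Type u} [Order.Frame H] {S : Signature.{u}} {X : Type u}
    (Λ : Theory H S X) : Theory H S X :=
  { p | Deriv Λ p.1 p.2 }
/-- A Σ-fuzzy algebra: a fuzzy set with operations (compatible with membership
degrees) and constants. -/
structure FuzzyAlgebra (H : Type u) [Order.Frame H] (S : Signature.{u}) :
    Type (u + 1) where
  carrier : Type u
  μ : carrier → H
  ops (f : S.Op) : (Fin (S.ar f : ℕ) → carrier) → carrier
  le_ops : ∀ (f : S.Op) (as : Fin (S.ar f : ℕ) → carrier),
    (⨅ i, μ (as i)) ≤ μ (ops f as)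
  consts : S.Const → carrier

/-- Evaluation of a term in a Σ-fuzzy algebra under an assignment of the variables. -/
def FuzzyAlgebra.eval {H : Type u} [Order.Frame H] {S : Signature.{u}} {X : Type u}
    (A : FuzzyAlgebra H S) (ι : X → A.carrier) : Term S X → A.carrier
  | .var x => ι x
  | .const c => A.consts c
  | .op f ts => A.ops f fun i => A.eval ι (ts i)

/-- Satisfaction of a formula in a Σ-fuzzy algebra under an assignment. -/
def FuzzyAlgebra.Sat {H : Type u} [Order.Frame H] {S : Signature.{u}} {X : Type u}
    (A : FuzzyAlgebra H S) (ι : X → A.carrier) : Formula H S X → Prop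
  | .eq s t => A.eval ι s = A.eval ι t
  | .mem l t => l ≤ A.μ (A.eval ι t)

/-- Satisfaction of a sequent `Γ ⊢ φ` (with respect to all assignments). -/
def FuzzyAlgebra.SatSeq {H : Type u} [Order.Frame H] {S : Signature.{u}} {X : Type u}
    (A : FuzzyAlgebra H S) (Γ : Set (Formula H S X)) (φ : Formula H S X) : Prop :=
  ∀ ι : X → A.carrier, (∀ ψ ∈ Γ, A.Sat ι ψ) → A.Sat ι φ

/-- A model of a fuzzy theory: an algebra satisfying all its sequents. -/
def FuzzyAlgebra.IsModel {H : Type u} [Order.Frame H] {S : Signature.{u}} {X : Type u}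
    (A : FuzzyAlgebra H S) (Λ : Theory H S X) : Prop :=
  ∀ p ∈ Λ, A.SatSeq p.1 p.2

/-- A morphism of Σ-fuzzy algebras: a fuzzy-set morphism commuting with all
operations and constants. -/
structure FuzzyAlgHom {H : Type u} [Order.Frame H] {S : Signature.{u}}
    (A B : FuzzyAlgebra H S) : Type u where
  toFun : A.carrier → B.carrier
  le_mem : ∀ x, A.μ x ≤ B.μ (toFun x)
  map_ops : ∀ (f : S.Op) (as : Fin (S.ar f : ℕ) → A.carrier),
    toFun (A.ops f as) = B.ops f fun i => toFun (as i)
  map_consts : ∀ c, toFun (A.consts c) = B.consts c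

/-!
Soundness is a routine induction on derivations. For completeness one builds the term model
of `Λ`: terms modulo provable equality, where the class of `t` has membership degree
`⋁ {l | ⊢_Λ ∃_l t}`. By the supremum rule this degree is itself derivable, so `l ≤ μ [t]` holds
exactly when `⊢_Λ ∃_l t`; under an assignment `x ↦ [σ x]` a formula `ψ` is therefore satisfied
exactly when `ψ[σ]` is derivable. The substitution and cut rules then make the term model a model
of `Λ`, and evaluating `φ` at the identity substitution shows `⊢_Λ φ`.
-/

theorem Term.subst_var {S : Signature.{u}} {X : Type u} : ∀ t : Term S X, t.subst .var = t
  | .var _ => rfl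
  | .const _ => rfl
  | .op f ts => congrArg (Term.op f) (funext fun i => (ts i).subst_var)

theorem Formula.subst_var {H : Type u} {S : Signature.{u}} {X : Type u} :
    ∀ φ : Formula H S X, φ.subst .var = φ
  | .eq s t => by rw [Formula.subst, s.subst_var, t.subst_var]
  | .mem l t => by rw [Formula.subst, t.subst_var]

section

variable {H : Type u} [Order.Frame H] {S : Signature.{u}} {X : Type u}

namespace FuzzyAlgebra

variable (A : FuzzyAlgebra H S) (ι : X → A.carrier) (σ : X → Term S X)

theorem eval_subst : ∀ t : Term S X, A.eval ι (t.subst σ) = A.eval (fun x => A.eval ι (σ x)) t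
  | .var _ => rfl
  | .const _ => rfl
  | .op f ts => congrArg (A.ops f) (funext fun i => eval_subst (ts i))

theorem sat_subst (ψ : Formula H S X) :
    A.Sat ι (ψ.subst σ) ↔ A.Sat (fun x => A.eval ι (σ x)) ψ := by
  cases ψ <;> simp only [Sat, Formula.subst, eval_subst]

end FuzzyAlgebra

theorem Deriv.sound {Λ : Theory H S X} {Γ : Set (Formula H S X)} {φ : Formula H S X}
    (h : Deriv Λ Γ φ) {A : FuzzyAlgebra H S} (hA : A.IsModel Λ) : A.SatSeq Γ φ := by
  induction h with
  | ax hmem => exact hA _ hmem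
  | assum hmem => exact fun _ hΓ => hΓ _ hmem
  | weak _ ih => exact fun ι hΓ => ih ι fun ψ hψ => hΓ ψ (Or.inl hψ)
  | cut _ _ ih₁ ih₂ => exact fun ι hΓ => ih₂ ι fun ψ hψ => ih₁ ψ hψ ι hΓ
  | refl => exact fun _ _ => rfl
  | symm _ ih => exact fun ι hΓ => (ih ι hΓ).symm
  | trans _ _ ih₁ ih₂ => exact fun ι hΓ => (ih₁ ι hΓ).trans (ih₂ ι hΓ)
  | sub σ _ ih =>
      intro ι hΓ
      refine (A.sat_subst ι σ _).mpr (ih _ fun ψ hψ => ?_)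
      exact (A.sat_subst ι σ ψ).mp (hΓ _ (Set.mem_image_of_mem _ hψ))
  | cong f _ _ _ ih => exact fun ι hΓ => congrArg (A.ops f) (funext fun i => ih i ι hΓ)
  | inf => exact fun _ _ => bot_le
  | mon _ _ ih => exact fun ι hΓ => inf_le_left.trans (ih ι hΓ)
  | exp f _ _ _ ih => exact fun ι hΓ => (iInf_mono fun i => ih i ι hΓ).trans (A.le_ops f _)
  | sup L _ ih => exact fun ι hΓ => sSup_le fun l hl => ih l hl ι hΓ
  | fn _ _ ih₁ ih₂ =>
      intro ι hΓ
      show _ ≤ A.μ (A.eval ι _)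
      exact (ih₁ ι hΓ) ▸ ih₂ ι hΓ

namespace TermModel

variable (Λ : Theory H S X)

def provEqSetoid : Setoid (Term S X) where
  r s t := Deriv Λ ∅ (.eq s t)
  iseqv := ⟨fun _ => .refl, .symm, .trans⟩

def memDegree (t : Term S X) : H :=
  sSup {l | Deriv Λ ∅ (.mem l t)}

theorem deriv_mem_memDegree (t : Term S X) : Deriv Λ ∅ (.mem (memDegree Λ t) t) :=
  .sup _ fun _ hl => hl

theorem le_memDegree_iff {l : H} {t : Term S X} :
    l ≤ memDegree Λ t ↔ Deriv Λ ∅ (.mem l t) := by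
  refine ⟨fun hl => ?_, fun h => le_sSup h⟩
  simpa only [inf_eq_right.mpr hl] using (deriv_mem_memDegree Λ t).mon l

theorem memDegree_congr {s t : Term S X} (h : Deriv Λ ∅ (.eq s t)) :
    memDegree Λ s = memDegree Λ t :=
  congrArg sSup (Set.ext fun _ => ⟨(h.fn ·), (h.symm.fn ·)⟩)

end TermModel

open TermModel in
noncomputable def termModel (Λ : Theory H S X) : FuzzyAlgebra H S where
  carrier := Quotient (provEqSetoid Λ)
  μ q := memDegree Λ q.out
  ops f as := Quotient.mk _ (.op f fun i => (as i).out)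
  le_ops f _ := by
    show _ ≤ memDegree Λ (Quotient.mk _ _).out
    rw [memDegree_congr Λ (Quotient.mk_out (s := provEqSetoid Λ) _)]
    exact (le_memDegree_iff Λ).mpr (.exp f _ _ fun _ => deriv_mem_memDegree Λ _)
  consts c := Quotient.mk _ (.const c)

namespace TermModel

variable (Λ : Theory H S X)

def mk (t : Term S X) : (termModel Λ).carrier :=
  Quotient.mk (provEqSetoid Λ) t

theorem mk_surjective : Function.Surjective (mk Λ) :=
  Quotient.mk_surjective

theorem mk_eq_mk_iff {s t : Term S X} : mk Λ s = mk Λ t ↔ Deriv Λ ∅ (.eq s t) :=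
  Quotient.eq

theorem μ_mk (t : Term S X) : (termModel Λ).μ (mk Λ t) = memDegree Λ t :=
  memDegree_congr Λ (Quotient.mk_out (s := provEqSetoid Λ) t)

theorem ops_mk (f : S.Op) (ts : Fin (S.ar f : ℕ) → Term S X) :
    (termModel Λ).ops f (fun i => mk Λ (ts i)) = mk Λ (.op f ts) :=
  Quotient.sound (Deriv.cong f _ _ fun i => Quotient.mk_out (s := provEqSetoid Λ) (ts i))

theorem eval_mk (σ : X → Term S X) :
    ∀ t : Term S X, (termModel Λ).eval (fun x => mk Λ (σ x)) t = mk Λ (t.subst σ)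
  | .var _ => rfl
  | .const _ => rfl
  | .op f ts => by
      simp only [FuzzyAlgebra.eval, Term.subst, eval_mk σ]
      exact ops_mk Λ f _

theorem sat_mk_iff (σ : X → Term S X) (ψ : Formula H S X) :
    (termModel Λ).Sat (fun x => mk Λ (σ x)) ψ ↔ Deriv Λ ∅ (ψ.subst σ) := by
  cases ψ with
  | eq s t =>
      simp only [FuzzyAlgebra.Sat, eval_mk, Formula.subst]
      exact mk_eq_mk_iff Λ
  | mem l t =>
      simp only [FuzzyAlgebra.Sat, eval_mk, μ_mk, Formula.subst]
      exact le_memDegree_iff Λ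

end TermModel

open TermModel in
theorem termModel_isModel (Λ : Theory H S X) : (termModel Λ).IsModel Λ := by
  rintro ⟨Γ, ψ⟩ hmem ι hΓ
  choose σ hσ using fun x => mk_surjective Λ (ι x)
  obtain rfl : (fun x => mk Λ (σ x)) = ι := funext hσ
  refine (sat_mk_iff Λ σ ψ).mpr (.cut ?_ (.sub σ (.ax hmem)))
  rintro _ ⟨χ, hχ, rfl⟩
  exact (sat_mk_iff Λ σ χ).mp (hΓ χ hχ)

end

/-- Completeness for formulae: a formula is satisfied by all models of a theory `Λ`
iff it is derivable from `Λ`. -/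
theorem completeness_for_formulae {H : Type u} [Order.Frame H] {S : Signature.{u}}
    {X : Type u} (Λ : Theory H S X) (φ : Formula H S X) :
    (∀ A : FuzzyAlgebra H S, A.IsModel Λ → ∀ ι : X → A.carrier, A.Sat ι φ) ↔
      Deriv Λ ∅ φ := by
  constructor
  · intro h
    have hφ := (TermModel.sat_mk_iff Λ .var φ).mp (h _ (termModel_isModel Λ) _)
    rwa [Formula.subst_var] at hφ
  · exact fun h A hA ι => h.sound hA ι fun _ hψ => (Set.notMem_empty _ hψ).elim
end

section
/- For any basic fuzzy theory Λ (every sequent of Λ has the form Γ ⊢ φ where all formulae in Γ contain only variables), the comparison functor K : Mod(Λ) → EM(T_Λ) into the Eilenberg–Moore category of the associated monad T_Λ = U_Λ ∘ F_Λ on Fuz(H) is an isomorphism of categories, with inverse H sending an Eilenberg–Moore algebra ξ : T_Λ(M, μ_M) → (M, μ_M) to the Σ-fuzzy algebra on (M, μ_M) with c^{H(ξ)} = ξ(c^{F_Λ(M,μ_M)}) and f^{H(ξ)} = ξ ∘ f^{F_Λ(M,μ_M)} ∘ η^{ar(f)}; in particular Mod(Λ) and EM(T_Λ) are equivalent categories.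 -/
universe u

/-- An `H`-fuzzy set: a set together with a membership function into the frame `H`. -/
structure FuzzySet (H : Type u) [Order.Frame H] : Type (u + 1) where
  carrier : Type u
  μ : carrier → H

/-- A morphism of fuzzy sets: a function that does not decrease membership degrees. -/
structure FuzzyHom {H : Type u} [Order.Frame H] (A B : FuzzySet H) : Type u where
  toFun : A.carrier → B.carrier
  le_mem : ∀ x, A.μ x ≤ B.μ (toFun x)

/-- The underlying fuzzy set of a Σ-fuzzy algebra. -/
def FuzzyAlgebra.toFuzzySet {H : Type u} [Order.Frame H] {S : Signature.{u}}
    (A : FuzzyAlgebra H S) : FuzzySet H :=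
  ⟨A.carrier, A.μ⟩
/-- Identity morphism of Σ-fuzzy algebras. -/
def FuzzyAlgHom.id {H : Type u} [Order.Frame H] {S : Signature.{u}}
    (A : FuzzyAlgebra H S) : FuzzyAlgHom A A :=
  ⟨_root_.id, fun _ => le_rfl, fun _ _ => rfl, fun _ => rfl⟩

/-- Composition of morphisms of Σ-fuzzy algebras. -/
def FuzzyAlgHom.comp {H : Type u} [Order.Frame H] {S : Signature.{u}}
    {A B C : FuzzyAlgebra H S} (f : FuzzyAlgHom A B) (g : FuzzyAlgHom B C) :
    FuzzyAlgHom A C where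
  toFun := g.toFun ∘ f.toFun
  le_mem x := (f.le_mem x).trans (g.le_mem _)
  map_ops h as := by simp [Function.comp, f.map_ops, g.map_ops]
  map_consts c := by simp [Function.comp, f.map_consts, g.map_consts]

/-- The category `Alg(Σ)` of Σ-fuzzy algebras. -/
instance algCat {H : Type u} [Order.Frame H] {S : Signature.{u}} :
    CategoryTheory.Category.{u} (FuzzyAlgebra H S) where
  Hom A B := FuzzyAlgHom A B
  id A := FuzzyAlgHom.id A
  comp f g := f.comp g
  id_comp _ := rfl
  comp_id _ := rfl
  assoc _ _ _ := rfl

/-- The forgetful functor `V_Σ : Alg(Σ) → Set`. -/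
def forgetAlg (H : Type u) [Order.Frame H] (S : Signature.{u}) :
    CategoryTheory.Functor (FuzzyAlgebra H S) (Type u) where
  obj A := A.carrier
  map f := TypeCat.ofHom (FuzzyAlgHom.toFun f)
  map_id _ := rfl
  map_comp _ _ := rfl

/-- The term algebra on a set `X`: terms with membership constantly `⊥` and
syntactic operations and constants. -/
def termAlgebra (H : Type u) [Order.Frame H] (S : Signature.{u}) (X : Type u) :
    FuzzyAlgebra H S where
  carrier := Term S X
  μ := fun _ => ⊥
  ops f ts := Term.op f ts
  le_ops f as := iInf_le (fun _ => (⊥ : H)) ⟨0, (S.ar f).pos⟩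
  consts := Term.const

open CategoryTheory

/-- The category `Fuz(H)` of `H`-fuzzy sets. -/
instance fuzCat {H : Type u} [Order.Frame H] : Category.{u} (FuzzySet H) where
  Hom A B := FuzzyHom A B
  id _ := ⟨_root_.id, fun _ => le_rfl⟩
  comp f g := ⟨g.toFun ∘ f.toFun, fun x => (f.le_mem x).trans (g.le_mem _)⟩
  id_comp _ := rfl
  comp_id _ := rfl
  assoc _ _ _ := rfl

/-- The category `Mod(Λ)` of models of a fuzzy theory `Λ`, as a full subcategory of
`Alg(Σ)`. -/
abbrev ModCat {H : Type u} [Order.Frame H] {S : Signature.{u}} {X : Type u}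
    (Λ : Theory H S X) : Type (u + 1) :=
  CategoryTheory.ObjectProperty.FullSubcategory (fun A : FuzzyAlgebra H S => A.IsModel Λ)

/-- The forgetful functor `U_Λ : Mod(Λ) → Fuz(H)`. -/
def forgetMod {H : Type u} [Order.Frame H] {S : Signature.{u}} {X : Type u}
    (Λ : Theory H S X) : ModCat Λ ⥤ FuzzySet H where
  obj A := A.obj.toFuzzySet
  map f := ⟨FuzzyAlgHom.toFun f.hom, FuzzyAlgHom.le_mem f.hom⟩
  map_id _ := rfl
  map_comp _ _ := rfl

/-- A formula containing only variables. -/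
inductive Formula.VarsOnly {H : Type u} {S : Signature.{u}} {X : Type u} :
    Formula H S X → Prop
  | eq (x y : X) : VarsOnly (.eq (.var x) (.var y))
  | mem (l : H) (x : X) : VarsOnly (.mem l (.var x))

/-- A basic theory: every premise of every sequent contains only variables. -/
def Theory.IsBasic {H : Type u} [Order.Frame H] {S : Signature.{u}} {X : Type u}
    (Λ : Theory H S X) : Prop :=
  ∀ p ∈ Λ, ∀ φ ∈ p.1, Formula.VarsOnly φ

/-! For an Eilenberg–Moore algebra `ξ : T_Λ M → M` put `f(a⃗) := ξ(f(η a⃗))` and `c := ξ(c)` on `M`.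
The unit and associativity laws of `ξ` make `ξ : F_Λ M → M` a homomorphism, so every term
evaluates in `M` as `ξ` applied to its value in the free model `F_Λ M` under `η`. The premises of
a basic theory mention only variables, so they transfer from `M` to `F_Λ M` along `η`; the
conclusion then holds in `F_Λ M` and transfers back along `ξ`. The two constructions are inverse
on the nose: for a model `D` the counit `ε_D` is a homomorphism with `ε_D ∘ η = id`, and for `ξ`
the counit at the new model is `ξ` itself, both being adjoint transposes of the identity. -/

@[ext]
theorem FuzzyHom.ext {H : Type u} [Order.Frame H] {A B : FuzzySet H} {f g : FuzzyHom A B}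
    (h : f.toFun = g.toFun) : f = g := by
  cases f; cases g; cases h; rfl

theorem FuzzyHom.congr_toFun {H : Type u} [Order.Frame H] {A B : FuzzySet H} {f g : A ⟶ B}
    (h : f = g) (x : A.carrier) : f.toFun x = g.toFun x := h ▸ rfl

@[ext]
theorem FuzzyAlgHom.ext {H : Type u} [Order.Frame H] {S : Signature.{u}}
    {A B : FuzzyAlgebra H S} {f g : FuzzyAlgHom A B} (h : f.toFun = g.toFun) : f = g := by
  cases f; cases g; cases h; rfl

theorem FuzzyAlgebra.mk_eq_self {H : Type u} [Order.Frame H] {S : Signature.{u}}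
    (A : FuzzyAlgebra H S) {ops : ∀ f : S.Op, (Fin (S.ar f : ℕ) → A.carrier) → A.carrier}
    {le_ops} {consts : S.Const → A.carrier} (hops : ops = A.ops) (hconsts : consts = A.consts) :
    FuzzyAlgebra.mk A.carrier A.μ ops le_ops consts = A := by
  subst hops hconsts; rfl

theorem Monad.Algebra.mk_eq_self {C : Type*} [Category C] {T : Monad C} (M : T.Algebra)
    {a : (T : C ⥤ C).obj M.A ⟶ M.A} {unit assoc} (ha : a = M.a) :
    Monad.Algebra.mk M.A a unit assoc = M := by
  subst ha; rfl

theorem ModCat.comp_toFun {H : Type u} [Order.Frame H] {S : Signature.{u}} {X : Type u}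
    {Λ : Theory H S X} {A B C : ModCat Λ} (f : A ⟶ B) (g : B ⟶ C) (x : A.obj.carrier) :
    (f ≫ g).hom.toFun x = g.hom.toFun (f.hom.toFun x) := rfl

theorem Monad.Algebra.comp_f_toFun {H : Type u} [Order.Frame H] {T : Monad (FuzzySet H)}
    {P Q R : T.Algebra} (f : P ⟶ Q) (g : Q ⟶ R) (x : P.A.carrier) :
    (f ≫ g).f.toFun x = g.f.toFun (f.f.toFun x) := rfl

theorem ModCat.eqToHom_toFun {H : Type u} [Order.Frame H] {S : Signature.{u}} {X : Type u}
    {Λ : Theory H S X} {A B : ModCat Λ} (e : A = B) (x : A.obj.carrier) :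
    (eqToHom e).hom.toFun x = cast (congrArg (fun D : ModCat Λ => D.obj.carrier) e) x := by
  subst e; rfl

theorem Monad.Algebra.eqToHom_f_toFun {H : Type u} [Order.Frame H] {T : Monad (FuzzySet H)}
    {P Q : T.Algebra} (e : P = Q) (x : P.A.carrier) :
    (eqToHom e).f.toFun x = cast (congrArg (fun M : T.Algebra => M.A.carrier) e) x := by
  subst e; rfl

section EilenbergMoore

variable {H : Type u} [Order.Frame H] {S : Signature.{u}} {X : Type u} {Λ : Theory H S X}
  {F : FuzzySet H ⥤ ModCat Λ} (adj : F ⊣ forgetMod Λ)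

theorem right_triangle_toFun (D : ModCat Λ) (b : D.obj.carrier) :
    (adj.counit.app D).hom.toFun ((adj.unit.app ((forgetMod Λ).obj D)).toFun b) = b :=
  FuzzyHom.congr_toFun (adj.right_triangle_components D) b

theorem unit_naturality_toFun {A B : FuzzySet H} (g : A ⟶ B) (x : A.carrier) :
    (adj.unit.app B).toFun (g.toFun x) = (F.map g).hom.toFun ((adj.unit.app A).toFun x) :=
  FuzzyHom.congr_toFun (adj.unit.naturality g) x

/-- The algebra `H(ξ)` of an Eilenberg–Moore algebra `ξ : T_Λ M → M`. -/
def emFuzzyAlgebra (M : adj.toMonad.Algebra) : FuzzyAlgebra H S where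
  carrier := M.A.carrier
  μ := M.A.μ
  ops f as := M.a.toFun ((F.obj M.A).obj.ops f fun i => (adj.unit.app M.A).toFun (as i))
  le_ops f as :=
    (iInf_mono fun i => (adj.unit.app M.A).le_mem (as i)).trans
      (((F.obj M.A).obj.le_ops f _).trans (M.a.le_mem _))
  consts c := M.a.toFun ((F.obj M.A).obj.consts c)

theorem structureMap_map_ops (M : adj.toMonad.Algebra) (f : S.Op)
    (bs : Fin (S.ar f : ℕ) → (F.obj M.A).obj.carrier) :
    M.a.toFun ((F.obj M.A).obj.ops f bs) =
      (emFuzzyAlgebra adj M).ops f fun i => M.a.toFun (bs i) := by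
  set TM := (forgetMod Λ).obj (F.obj M.A)
  symm
  -- naturality of `η`, associativity of `ξ`, and the triangle identity `ε_{F M} ∘ η_{T M} = id`
  calc M.a.toFun ((F.obj M.A).obj.ops f fun i => (adj.unit.app M.A).toFun (M.a.toFun (bs i)))
      = M.a.toFun ((F.map M.a).hom.toFun
          ((F.obj TM).obj.ops f fun i => (adj.unit.app TM).toFun (bs i))) := by
        refine congrArg M.a.toFun (Eq.trans ?_ ((F.map M.a).hom.map_ops f _).symm)
        exact congrArg _ (funext fun i => unit_naturality_toFun adj M.a (bs i))
    _ = M.a.toFun ((adj.counit.app (F.obj M.A)).hom.toFun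
          ((F.obj TM).obj.ops f fun i => (adj.unit.app TM).toFun (bs i))) :=
        (FuzzyHom.congr_toFun M.assoc _).symm
    _ = M.a.toFun ((F.obj M.A).obj.ops f bs) := by
        refine congrArg M.a.toFun (((adj.counit.app (F.obj M.A)).hom.map_ops f _).trans ?_)
        exact congrArg _ (funext fun i => right_triangle_toFun adj (F.obj M.A) (bs i))

theorem emFuzzyAlgebra_eval (M : adj.toMonad.Algebra) (ι : X → M.A.carrier) (t : Term S X) :
    (emFuzzyAlgebra adj M).eval ι t =
      M.a.toFun ((F.obj M.A).obj.eval (fun x => (adj.unit.app M.A).toFun (ι x)) t) := by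
  induction t with
  | var x => exact (FuzzyHom.congr_toFun M.unit (ι x)).symm
  | const c => rfl
  | op f ts ih =>
    refine Eq.trans ?_ (structureMap_map_ops adj M f _).symm
    exact congrArg ((emFuzzyAlgebra adj M).ops f) (funext ih)

theorem emFuzzyAlgebra_isModel (hbasic : Λ.IsBasic) (M : adj.toMonad.Algebra) :
    (emFuzzyAlgebra adj M).IsModel Λ := by
  rintro ⟨Γ, φ⟩ hp ι hΓ
  set η := adj.unit.app M.A
  have hfree : (F.obj M.A).obj.Sat (fun x => η.toFun (ι x)) φ := by
    refine (F.obj M.A).property _ hp _ fun ψ hψ => ?_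
    have hsat := hΓ ψ hψ
    cases hbasic _ hp ψ hψ with
    | eq x y => exact congrArg η.toFun hsat
    | mem l x => exact hsat.trans (η.le_mem (ι x))
  cases φ with
  | eq s t =>
    exact (emFuzzyAlgebra_eval adj M ι s).trans
      ((congrArg M.a.toFun hfree).trans (emFuzzyAlgebra_eval adj M ι t).symm)
  | mem l t =>
    exact hfree.trans ((M.a.le_mem _).trans_eq
      (congrArg M.A.μ (emFuzzyAlgebra_eval adj M ι t).symm))

def emModel (hbasic : Λ.IsBasic) (M : adj.toMonad.Algebra) : ModCat Λ :=
  ⟨emFuzzyAlgebra adj M, emFuzzyAlgebra_isModel adj hbasic M⟩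

def emFuzzyAlgHom {M N : adj.toMonad.Algebra} (g : M ⟶ N) :
    FuzzyAlgHom (emFuzzyAlgebra adj M) (emFuzzyAlgebra adj N) where
  toFun := g.f.toFun
  le_mem := g.f.le_mem
  map_ops f as := by
    refine (FuzzyHom.congr_toFun g.h _).symm.trans (congrArg N.a.toFun ?_)
    refine ((F.map g.f).hom.map_ops f _).trans ?_
    exact congrArg _ (funext fun i => (unit_naturality_toFun adj g.f (as i)).symm)
  map_consts c :=
    (FuzzyHom.congr_toFun g.h _).symm.trans (congrArg N.a.toFun ((F.map g.f).hom.map_consts c))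

def emModelFunctor (hbasic : Λ.IsBasic) : adj.toMonad.Algebra ⥤ ModCat Λ where
  obj := emModel adj hbasic
  map g := ⟨emFuzzyAlgHom adj g⟩

def structureMapHom (hbasic : Λ.IsBasic) (M : adj.toMonad.Algebra) :
    F.obj M.A ⟶ emModel adj hbasic M :=
  ⟨{ toFun := M.a.toFun
     le_mem := M.a.le_mem
     map_ops := structureMap_map_ops adj M
     map_consts _ := rfl }⟩

theorem counit_app_emModel (hbasic : Λ.IsBasic) (M : adj.toMonad.Algebra) :
    adj.counit.app (emModel adj hbasic M) = structureMapHom adj hbasic M :=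
  (adj.homEquiv _ _).injective ((adj.right_triangle_components _).trans M.unit.symm)

theorem emModel_comparison_obj (hbasic : Λ.IsBasic) (D : ModCat Λ) :
    emModel adj hbasic ((Monad.comparison adj).obj D) = D := by
  refine ObjectProperty.FullSubcategory.ext (FuzzyAlgebra.mk_eq_self D.obj ?_ ?_)
  · funext f as
    exact ((adj.counit.app D).hom.map_ops f _).trans
      (congrArg _ (funext fun i => right_triangle_toFun adj D (as i)))
  · funext c
    exact (adj.counit.app D).hom.map_consts c

theorem comparison_obj_emModel (hbasic : Λ.IsBasic) (M : adj.toMonad.Algebra) :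
    (Monad.comparison adj).obj (emModel adj hbasic M) = M :=
  Monad.Algebra.mk_eq_self M (congrArg (forgetMod Λ).map (counit_app_emModel adj hbasic M))

theorem comparison_comp_emModelFunctor (hbasic : Λ.IsBasic) :
    Monad.comparison adj ⋙ emModelFunctor adj hbasic = 𝟭 (ModCat Λ) := by
  refine CategoryTheory.Functor.ext (emModel_comparison_obj adj hbasic) fun A B g => ?_
  refine ObjectProperty.hom_ext _ (FuzzyAlgHom.ext (funext fun x => ?_))
  erw [ModCat.comp_toFun, ModCat.comp_toFun, ModCat.eqToHom_toFun, ModCat.eqToHom_toFun]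
  rfl

theorem emModelFunctor_comp_comparison (hbasic : Λ.IsBasic) :
    emModelFunctor adj hbasic ⋙ Monad.comparison adj = 𝟭 adj.toMonad.Algebra := by
  refine CategoryTheory.Functor.ext (comparison_obj_emModel adj hbasic) fun M N g => ?_
  refine Monad.Algebra.Hom.ext (FuzzyHom.ext (funext fun x => ?_))
  erw [Monad.Algebra.comp_f_toFun, Monad.Algebra.comp_f_toFun, Monad.Algebra.eqToHom_f_toFun,
    Monad.Algebra.eqToHom_f_toFun]
  rfl

end EilenbergMoore

/-- For a basic theory `Λ`, the comparison functor `K : Mod(Λ) → EM(T_Λ)` into the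
Eilenberg–Moore category of the monad `T_Λ = U_Λ ∘ F_Λ` induced by the free-model
adjunction `F_Λ ⊣ U_Λ` is an isomorphism of categories (it admits a strictly inverse
functor); in particular `Mod(Λ)` and `EM(T_Λ)` are equivalent categories. -/
theorem basic_theory_models_are_EilenbergMoore_algebras {H : Type u} [Order.Frame H]
    {S : Signature.{u}} {X : Type u} (Λ : Theory H S X) (hbasic : Λ.IsBasic)
    (F : FuzzySet H ⥤ ModCat Λ) (adj : F ⊣ forgetMod Λ) :
    (∃ Hinv : adj.toMonad.Algebra ⥤ ModCat Λ,
        Monad.comparison adj ⋙ Hinv = 𝟭 (ModCat Λ) ∧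
        Hinv ⋙ Monad.comparison adj = 𝟭 adj.toMonad.Algebra) ∧
    (Monad.comparison adj).IsEquivalence := by
  have hKG := comparison_comp_emModelFunctor adj hbasic
  have hGK := emModelFunctor_comp_comparison adj hbasic
  refine ⟨⟨emModelFunctor adj hbasic, hKG, hGK⟩, ?_⟩
  exact (CategoryTheory.Equivalence.mk _ _ (eqToIso hKG.symm) (eqToIso hGK)).isEquivalence_functor
end
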